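/- arXiv:2208.01856 — 2 statements merged into one kernel-verified Lean document; each statement's English description precedes it below -/
import Mathlib

section
/- The cubic polynomial p(k) = 6k³ + 3Bk² + (3A² + 6ξ)k − 3A²B/2 + 3ξB has three distinct real roots whenever its associated discriminant expression Λ(ξ) = ξ³/27 + (A²/18 + B²/54)ξ² + (A⁴/36 − 7A²B²/108 + B⁴/432)ξ + A⁶/216 − A²B⁴/864 + 11A⁴B²/432 is negative. -/
/-!
At its critical points k± = (-B ± s)/6, where s² = D := B² - 6A² - 12ξ, the cubic takes the values
α ∓ s³/18 with α = B³/18 - 2A²B + 2ξB, and 144 Λ(ξ) = α² - D³/324. So Λ(ξ) < 0 means |α| < s³/18: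
the local maximum p(k₋) is positive and the local minimum p(k₊) is negative. Since p → ±∞ at ±∞,
the intermediate value theorem gives a root left of k₋, one between k₋ and k₊ and one right of k₊.
-/

open Filter Polynomial

theorem exists_three_zeros_of_pos_of_neg {f : ℝ → ℝ} (hf : Continuous f)
    (hbot : Tendsto f atBot atBot) (htop : Tendsto f atTop atTop) {x y : ℝ} (hxy : x < y)
    (hx : 0 < f x) (hy : f y < 0) :
    ∃ r₁ r₂ r₃ : ℝ, r₁ < r₂ ∧ r₂ < r₃ ∧ f r₁ = 0 ∧ f r₂ = 0 ∧ f r₃ = 0 := by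
  obtain ⟨a, hfa, hax⟩ := ((hbot.eventually (eventually_lt_atBot 0)).and (eventually_lt_atBot x)).exists
  obtain ⟨b, hfb, hyb⟩ := ((htop.eventually (eventually_gt_atTop 0)).and (eventually_gt_atTop y)).exists
  obtain ⟨r₁, hr₁, hfr₁⟩ := intermediate_value_Ioo hax.le hf.continuousOn ⟨hfa, hx⟩
  obtain ⟨r₂, hr₂, hfr₂⟩ := intermediate_value_Ioo' hxy.le hf.continuousOn ⟨hy, hx⟩
  obtain ⟨r₃, hr₃, hfr₃⟩ := intermediate_value_Ioo hyb.le hf.continuousOn ⟨hy, hfb⟩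
  exact ⟨r₁, r₂, r₃, hr₁.2.trans hr₂.1, hr₂.2.trans hr₃.1, hfr₁, hfr₂, hfr₃⟩

theorem tendsto_cubic_atTop {a : ℝ} (ha : 0 < a) (b c d : ℝ) :
    Tendsto (fun x : ℝ => a * x ^ 3 + b * x ^ 2 + c * x + d) atTop atTop := by
  have h := tendsto_atTop_of_leadingCoeff_nonneg (C a * X ^ 3 + C b * X ^ 2 + C c * X + C d)
    (by rw [degree_cubic ha.ne']; norm_num) (by rw [leadingCoeff_cubic ha.ne']; exact ha.le)
  simpa only [eval_add, eval_mul, eval_C, eval_pow, eval_X] using h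

theorem tendsto_cubic_atBot {a : ℝ} (ha : 0 < a) (b c d : ℝ) :
    Tendsto (fun x : ℝ => a * x ^ 3 + b * x ^ 2 + c * x + d) atBot atBot := by
  have h := tendsto_neg_atTop_atBot.comp
    ((tendsto_cubic_atTop ha (-b) c (-d)).comp tendsto_neg_atBot_atTop)
  refine h.congr fun x => ?_
  simp only [Function.comp_apply]
  ring

noncomputable section

def cubicP (A B ξ k : ℝ) : ℝ :=
  6 * k ^ 3 + 3 * B * k ^ 2 + (3 * A ^ 2 + 6 * ξ) * k - 3 * A ^ 2 * B / 2 + 3 * ξ * B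

def cubicΛ (A B ξ : ℝ) : ℝ :=
  ξ ^ 3 / 27 + (A ^ 2 / 18 + B ^ 2 / 54) * ξ ^ 2
    + (A ^ 4 / 36 - 7 * A ^ 2 * B ^ 2 / 108 + B ^ 4 / 432) * ξ
    + A ^ 6 / 216 - A ^ 2 * B ^ 4 / 864 + 11 * A ^ 4 * B ^ 2 / 432

def cubicD (A B ξ : ℝ) : ℝ := B ^ 2 - 6 * A ^ 2 - 12 * ξ

def cubicα (A B ξ : ℝ) : ℝ := B ^ 3 / 18 - 2 * A ^ 2 * B + 2 * ξ * B

end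

theorem continuous_cubicP (A B ξ : ℝ) : Continuous (cubicP A B ξ) := by
  unfold cubicP
  fun_prop

theorem cubicP_eq (A B ξ : ℝ) : cubicP A B ξ =
    fun k => 6 * k ^ 3 + 3 * B * k ^ 2 + (3 * A ^ 2 + 6 * ξ) * k + (3 * ξ * B - 3 * A ^ 2 * B / 2) := by
  ext k
  unfold cubicP
  ring

theorem cubicΛ_eq (A B ξ : ℝ) : 144 * cubicΛ A B ξ = cubicα A B ξ ^ 2 - cubicD A B ξ ^ 3 / 324 := by
  unfold cubicΛ cubicα cubicD
  ring

theorem cubicP_critical {A B ξ s : ℝ} (hs : s ^ 2 = cubicD A B ξ) :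
    cubicP A B ξ ((-B + s) / 6) = cubicα A B ξ - s ^ 3 / 18 := by
  unfold cubicP cubicα
  unfold cubicD at hs
  linear_combination s / 12 * hs

theorem exists_cubicP_pos_neg {A B ξ : ℝ} (hΛ : cubicΛ A B ξ < 0) :
    ∃ x y, x < y ∧ 0 < cubicP A B ξ x ∧ cubicP A B ξ y < 0 := by
  have hD : 0 < cubicD A B ξ := by
    have := cubicΛ_eq A B ξ
    nlinarith [sq_nonneg (cubicα A B ξ), sq_nonneg (cubicD A B ξ)]
  set s := Real.sqrt (cubicD A B ξ)
  have hs : s ^ 2 = cubicD A B ξ := Real.sq_sqrt hD.le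
  have hs_pos : 0 < s := Real.sqrt_pos.2 hD
  have hα : -(s ^ 3 / 18) < cubicα A B ξ ∧ cubicα A B ξ < s ^ 3 / 18 := by
    refine abs_lt_of_sq_lt_sq' ?_ (by positivity)
    have h := cubicΛ_eq A B ξ
    rw [← hs] at h
    nlinarith
  refine ⟨(-B + -s) / 6, (-B + s) / 6, by linarith, ?_, ?_⟩
  · rw [cubicP_critical (by rw [neg_sq, hs])]
    linarith [hα.1]
  · rw [cubicP_critical hs]
    linarith [hα.2]

theorem cubic_three_real_roots_general (A B ξ : ℝ)
    (hΛ : ξ ^ 3 / 27 + (A ^ 2 / 18 + B ^ 2 / 54) * ξ ^ 2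
        + (A ^ 4 / 36 - 7 * A ^ 2 * B ^ 2 / 108 + B ^ 4 / 432) * ξ
        + A ^ 6 / 216 - A ^ 2 * B ^ 4 / 864 + 11 * A ^ 4 * B ^ 2 / 432 < 0) :
    ∃ r₁ r₂ r₃ : ℝ, r₁ < r₂ ∧ r₂ < r₃ ∧
      (∀ r ∈ ({r₁, r₂, r₃} : Set ℝ),
        6 * r ^ 3 + 3 * B * r ^ 2 + (3 * A ^ 2 + 6 * ξ) * r - 3 * A ^ 2 * B / 2 + 3 * ξ * B = 0) := by
  obtain ⟨x, y, hxy, hx, hy⟩ := exists_cubicP_pos_neg (A := A) (B := B) (ξ := ξ) hΛ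
  obtain ⟨r₁, r₂, r₃, h₁₂, h₂₃, h₁, h₂, h₃⟩ := exists_three_zeros_of_pos_of_neg
    (continuous_cubicP A B ξ) (cubicP_eq A B ξ ▸ tendsto_cubic_atBot (by norm_num) _ _ _)
    (cubicP_eq A B ξ ▸ tendsto_cubic_atTop (by norm_num) _ _ _) hxy hx hy
  refine ⟨r₁, r₂, r₃, h₁₂, h₂₃, ?_⟩
  rintro r (rfl | rfl | rfl)
  exacts [h₁, h₂, h₃]

theorem cubic_three_real_roots (A B ξ : ℝ) (hA : 0 < A)
    (hΛ : ξ ^ 3 / 27 + (A ^ 2 / 18 + B ^ 2 / 54) * ξ ^ 2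
        + (A ^ 4 / 36 - 7 * A ^ 2 * B ^ 2 / 108 + B ^ 4 / 432) * ξ
        + A ^ 6 / 216 - A ^ 2 * B ^ 4 / 864 + 11 * A ^ 4 * B ^ 2 / 432 < 0) :
    ∃ r₁ r₂ r₃ : ℝ, r₁ < r₂ ∧ r₂ < r₃ ∧
      (∀ r ∈ ({r₁, r₂, r₃} : Set ℝ),
        6 * r ^ 3 + 3 * B * r ^ 2 + (3 * A ^ 2 + 6 * ξ) * r - 3 * A ^ 2 * B / 2 + 3 * ξ * B = 0) :=
  cubic_three_real_roots_general A B ξ hΛ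
end

section
/- For real k with k + B/2 > 0, the quantity Ω(k) := (2k² − Bk + B²/2 − A²)·X(k) with X(k) = √((k+B/2)² + A²) satisfies Ω(k) − 2k³ − (B³ − 6A²B)/4 → 0 as k → +∞. -/
/-!
Put `u = k + B/2` and `s = X + u`. Since `X² - u² = A²`, we have `X - u = A²/s`, so
`X = (s + A²/s)/2` and `u = (s - A²/s)/2`. In the variable `s` the cubic and constant
parts of `Ω` cancel exactly against `2k³ + (B³ - 6A²B)/4`, leaving a polynomial in `1/s`
without constant term, and `s → ∞` as `k → ∞`.
-/

open Filter Topology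

lemma tendsto_sqrt_sq_add_add_atTop (c : ℝ) :
    Tendsto (fun u : ℝ => √(u ^ 2 + c) + u) atTop atTop :=
  tendsto_atTop_mono (fun _ => le_add_of_nonneg_left (Real.sqrt_nonneg _)) tendsto_id

lemma eq_half_add_div_of_sq_eq_sq_add {X u a : ℝ} (h : X ^ 2 = u ^ 2 + a) (hs : X + u ≠ 0) :
    X = (X + u + a / (X + u)) / 2 ∧ u = (X + u - a / (X + u)) / 2 := by
  have hdiff : a / (X + u) = X - u := by
    rw [div_eq_iff hs]
    linear_combination -h
  constructor <;> linarith

lemma omega_sub_cubic_eq_of_param {A B k X s : ℝ} (hs : s ≠ 0) (hX : X = (s + A ^ 2 / s) / 2)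
    (hk : k + B / 2 = (s - A ^ 2 / s) / 2) :
    (2 * k ^ 2 - B * k + B ^ 2 / 2 - A ^ 2) * X - 2 * k ^ 3 - (B ^ 3 - 6 * A ^ 2 * B) / 4 =
      3 * A ^ 2 * (B ^ 2 - A ^ 2) / (2 * s) + 3 * A ^ 4 * B / (2 * s ^ 2)
        + A ^ 6 / (2 * s ^ 3) := by
  obtain rfl : k = (s - A ^ 2 / s) / 2 - B / 2 := by linarith
  subst hX
  field_simp
  ring

lemma tendsto_div_add_div_sq_add_div_cube_atTop (a b c : ℝ) :
    Tendsto (fun s : ℝ => a / (2 * s) + b / (2 * s ^ 2) + c / (2 * s ^ 3)) atTop (𝓝 0) := by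
  have h := tendsto_inv_atTop_zero (𝕜 := ℝ)
  have hsum := (((h.const_mul (a / 2)).add ((h.pow 2).const_mul (b / 2))).add
    ((h.pow 3).const_mul (c / 2)))
  simp only [ne_eq, OfNat.ofNat_ne_zero, not_false_eq_true, zero_pow, mul_zero, add_zero] at hsum
  refine hsum.congr fun s => ?_
  field_simp

theorem Omega_asymptotics_general (A B : ℝ) :
    let X : ℝ → ℝ := fun k => Real.sqrt ((k + B / 2) ^ 2 + A ^ 2)
    let Ω : ℝ → ℝ := fun k => (2 * k ^ 2 - B * k + B ^ 2 / 2 - A ^ 2) * X k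
    Filter.Tendsto (fun k => Ω k - 2 * k ^ 3 - (B ^ 3 - 6 * A ^ 2 * B) / 4)
      Filter.atTop (nhds 0) := by
  intro X Ω
  have hs : Tendsto (fun k => X k + (k + B / 2)) atTop atTop :=
    (tendsto_sqrt_sq_add_add_atTop (A ^ 2)).comp (tendsto_atTop_add_const_right _ _ tendsto_id)
  refine ((tendsto_div_add_div_sq_add_div_cube_atTop
    (3 * A ^ 2 * (B ^ 2 - A ^ 2)) (3 * A ^ 4 * B) (A ^ 6)).comp hs).congr' ?_
  filter_upwards [hs.eventually_ne_atTop 0] with k hk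
  obtain ⟨hX, hu⟩ := eq_half_add_div_of_sq_eq_sq_add (Real.sq_sqrt (by positivity)) hk
  exact (omega_sub_cubic_eq_of_param hk hX hu).symm

theorem Omega_asymptotics (A B : ℝ) (hA : 0 < A) :
    let X : ℝ → ℝ := fun k => Real.sqrt ((k + B / 2) ^ 2 + A ^ 2)
    let Ω : ℝ → ℝ := fun k => (2 * k ^ 2 - B * k + B ^ 2 / 2 - A ^ 2) * X k
    Filter.Tendsto (fun k => Ω k - 2 * k ^ 3 - (B ^ 3 - 6 * A ^ 2 * B) / 4)
      Filter.atTop (nhds 0) :=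
  Omega_asymptotics_general A B
end
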